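/- arXiv:0807.3756 — 9 statements merged into one kernel-verified Lean document; each statement's English description precedes it below -/
import Mathlib

section
/- Let X be a compact Hausdorff connected space (a continuum). If X is covered by a countable family of pairwise disjoint closed subsets, at least two of which are nonempty, then X cannot be covered this way; equivalently, if X = ⋃_{i} F_i with the F_i closed and pairwise disjoint, then at most one F_i is nonempty. -/
/-!
Suppose two of the pieces `F i`, `F j` are nonempty. A subcontinuum meeting two pieces can be
shrunk to a subcontinuum meeting two pieces and avoiding any prescribed piece `F n`: separate
`F n` from another piece `F m` it meets by an open `U ⊇ F n` with `closure U ∩ F m = ∅`; by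
boundary bumping, the component of a point of `F m` in `C \ U` reaches `closure U \ U`, hence a
third piece. Shrinking successively away from `F 0, F 1, …` yields a decreasing sequence of
nonempty continua whose intersection meets no piece, although the pieces cover `X`.
-/

open Set

section BoundaryBumping

variable {X : Type*} [TopologicalSpace X]

theorem IsCompact.connectedComponentIn {F : Set X} (hF : IsCompact F) (x : X) :
    IsCompact (connectedComponentIn F x) := by
  by_cases hx : x ∈ F
  · have : CompactSpace F := isCompact_iff_compactSpace.mp hF
    rw [connectedComponentIn_eq_image hx]
    exact isClosed_connectedComponent.isCompact.image continuous_subtype_val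
  · rw [connectedComponentIn_eq_empty hx]
    exact isCompact_empty

/-- In a compact Hausdorff space components are quasi-components. -/
theorem exists_isClopen_mem_disjoint_of_disjoint_connectedComponent [CompactSpace X]
    [T2Space X] {x : X} {K : Set X} (hK : IsClosed K) (hxK : Disjoint (connectedComponent x) K) :
    ∃ W : Set X, IsClopen W ∧ x ∈ W ∧ Disjoint W K := by
  rw [connectedComponent_eq_iInter_isClopen x, disjoint_comm, disjoint_iff_inter_eq_empty] at hxK
  obtain ⟨t, ht⟩ := hK.isCompact.elim_finite_subfamily_closed _
    (fun s : {s : Set X // IsClopen s ∧ x ∈ s} => s.2.1.isClosed) hxK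
  refine ⟨⋂ s ∈ t, (s : Set X), isClopen_biInter_finset fun s _ => s.2.1,
    mem_iInter₂.2 fun s _ => s.2.2, ?_⟩
  rw [disjoint_comm, disjoint_iff_inter_eq_empty]
  exact ht

/-- The boundary bumping theorem. -/
theorem connectedComponentIn_diff_inter_closure_nonempty [T2Space X]
    {C U : Set X} (hC : IsCompact C) (hCconn : IsPreconnected C) (hU : IsOpen U)
    (hCU : (C ∩ U).Nonempty) {x : X} (hx : x ∈ C \ U) :
    (connectedComponentIn (C \ U) x ∩ closure U).Nonempty := by
  have : CompactSpace ↥(C \ U) := isCompact_iff_compactSpace.mp (hC.diff hU)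
  rw [connectedComponentIn_eq_image hx, image_inter_nonempty_iff,
    ← not_disjoint_iff_nonempty_inter]
  intro hdisj
  obtain ⟨W, hW, hxW, hWU⟩ := exists_isClopen_mem_disjoint_of_disjoint_connectedComponent
    (isClosed_closure.preimage continuous_subtype_val) hdisj
  -- `C` would split into the closed sets `W` and `closure U ∪ ((C \ U) \ W)`.
  have hclosed {V : Set ↥(C \ U)} (hV : IsClosed V) : IsClosed (((↑) : _ → X) '' V) :=
    (hV.isCompact.image continuous_subtype_val).isClosed
  have hcover : C ⊆ (↑) '' W ∪ (closure U ∪ (↑) '' Wᶜ) := by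
    intro z hzC
    by_cases hzU : z ∈ U
    · exact Or.inr (Or.inl (subset_closure hzU))
    · by_cases hzW : (⟨z, hzC, hzU⟩ : ↥(C \ U)) ∈ W
      · exact Or.inl ⟨_, hzW, rfl⟩
      · exact Or.inr (Or.inr ⟨_, hzW, rfl⟩)
  obtain ⟨z, -, hzW, hz⟩ := isPreconnected_closed_iff.mp hCconn _ _ (hclosed hW.isClosed)
    (isClosed_closure.union (hclosed hW.compl.isClosed)) hcover
    ⟨x, hx.1, ⟨x, hx⟩, hxW, rfl⟩ (hCU.mono (inter_subset_inter_right _ (subset_closure.trans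
      subset_union_left)))
  obtain ⟨w, hw, rfl⟩ := hzW
  rcases hz with hzU | ⟨w', hw', hww'⟩
  · exact hWU.notMem_of_mem_left hw hzU
  · exact hw' (Subtype.val_injective hww' ▸ hw)

end BoundaryBumping

section Pieces

variable {X ι : Type*}

def MeetsTwo (F : ι → Set X) (C : Set X) : Prop :=
  ∃ a b, a ≠ b ∧ (C ∩ F a).Nonempty ∧ (C ∩ F b).Nonempty

theorem MeetsTwo.nonempty {F : ι → Set X} {C : Set X} (h : MeetsTwo F C) : C.Nonempty :=
  let ⟨_, _, _, ha, _⟩ := h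
  ha.mono inter_subset_left

theorem exists_subset_meetsTwo_disjoint [TopologicalSpace X] [T2Space X] [NormalSpace X]
    {F : ι → Set X} (hcl : ∀ i, IsClosed (F i)) (hdisj : Pairwise (Function.onFun Disjoint F))
    (hcov : ⋃ i, F i = univ) {C : Set X} (hC : IsCompact C) (hCconn : IsPreconnected C)
    (hCF : MeetsTwo F C) (n : ι) :
    ∃ K ⊆ C, IsCompact K ∧ IsPreconnected K ∧ MeetsTwo F K ∧ Disjoint K (F n) := by
  by_cases hCn : Disjoint C (F n)
  · exact ⟨C, subset_rfl, hC, hCconn, hCF, hCn⟩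
  obtain ⟨m, hmn, x, hxC, hxm⟩ : ∃ m, m ≠ n ∧ (C ∩ F m).Nonempty := by
    obtain ⟨a, b, hab, ha, hb⟩ := hCF
    rcases eq_or_ne a n with rfl | han
    exacts [⟨b, hab.symm, hb⟩, ⟨a, han, ha⟩]
  obtain ⟨U, hU, hnU, hUm⟩ := normal_exists_closure_subset (hcl n) (hcl m).isOpen_compl
    (subset_compl_iff_disjoint_right.mpr (hdisj hmn.symm))
  have hxU : x ∉ U := fun h => hUm (subset_closure h) hxm
  have hCU : (C ∩ U).Nonempty :=
    (not_disjoint_iff_nonempty_inter.mp hCn).mono (inter_subset_inter_right _ hnU)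
  set K := connectedComponentIn (C \ U) x
  obtain ⟨y, hyK, hyU⟩ :=
    connectedComponentIn_diff_inter_closure_nonempty hC hCconn hU hCU ⟨hxC, hxU⟩
  obtain ⟨k, hyk⟩ := mem_iUnion.mp (hcov ▸ mem_univ y)
  have hKCU : K ⊆ C \ U := connectedComponentIn_subset _ _
  refine ⟨K, hKCU.trans sdiff_subset, (hC.diff hU).connectedComponentIn x,
    isPreconnected_connectedComponentIn, ⟨m, k, ?_, ⟨x, mem_connectedComponentIn ⟨hxC, hxU⟩, hxm⟩,
    ⟨y, hyK, hyk⟩⟩, ?_⟩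
  · rintro rfl
    exact hUm hyU hyk
  · exact disjoint_left.mpr fun z hzK hzn => (hKCU hzK).2 (hnU hzn)

end Pieces

/-- Sierpiński theorem: a continuum (nonempty compact connected Hausdorff space) cannot be
covered by countably many pairwise disjoint closed sets, more than one of which is nonempty. -/
theorem sierpinski_continuum {X : Type*} [TopologicalSpace X] [CompactSpace X] [T2Space X]
    [ConnectedSpace X] (F : ℕ → Set X) (hcl : ∀ i, IsClosed (F i))
    (hdisj : Pairwise (Function.onFun Disjoint F)) (hcov : ⋃ i, F i = Set.univ) :
    ∀ i j, (F i).Nonempty → (F j).Nonempty → i = j := by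
  intro i j hi hj
  by_contra hij
  let Good (C : Set X) : Prop := IsCompact C ∧ IsPreconnected C ∧ MeetsTwo F C
  have step (n : ℕ) (C : {C // Good C}) : ∃ K : {C // Good C}, K.1 ⊆ C.1 ∧ Disjoint K.1 (F n) := by
    obtain ⟨K, hKC, hK⟩ := exists_subset_meetsTwo_disjoint hcl hdisj hcov C.2.1 C.2.2.1 C.2.2.2 n
    exact ⟨⟨K, hK.1, hK.2.1, hK.2.2.1⟩, hKC, hK.2.2.2⟩
  choose shrink hshrink_sub hshrink_disj using step
  let Z (n : ℕ) : {C // Good C} := Nat.rec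
    ⟨univ, isCompact_univ, isPreconnected_univ, i, j, hij, by simpa using hi, by simpa using hj⟩
    shrink n
  obtain ⟨p, hp⟩ := IsCompact.nonempty_iInter_of_sequence_nonempty_isCompact_isClosed
    (fun n => (Z n).1) (fun n => hshrink_sub n (Z n))
    (fun n => (Z n).2.2.2.nonempty) (Z 0).2.1 (fun n => (Z n).2.1.isClosed)
  obtain ⟨k, hpk⟩ := mem_iUnion.mp (hcov ▸ mem_univ p)
  -- `Z (k + 1)` is `shrink k (Z k)`, which avoids `F k`.
  exact (hshrink_disj k (Z k)).notMem_of_mem_left (mem_iInter.mp hp (k + 1)) hpk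
end

section
/- Let X be a compact Hausdorff space and X₀, X₁ disjoint closed subsets. If a set F ⊆ X cuts X between X₀ and X₁ (i.e., every continuum meeting both X₀ and X₁ meets F), and V is an open set with F ⊆ V and V disjoint from X₀ ∪ X₁, then V contains a closed partition P between X₀ and X₁: there exist closed sets X′₀, X′₁ with X = X′₀ ∪ X′₁, X_k ⊆ X′_k for k=0,1, and P = X′₀ ∩ X′₁ ⊆ V. -/
open Set

lemma clopen_sep_aux {Y : Type*} [TopologicalSpace Y] [CompactSpace Y] [T2Space Y]
    {S T : Set Y} (hS : IsClosed S) (hT : IsClosed T)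
    (h : ∀ a ∈ S, connectedComponent a ∩ T = ∅) :
    ∃ U : Set Y, IsClopen U ∧ S ⊆ U ∧ U ∩ T = ∅ := by
  -- for each a ∈ S find a clopen nbhd disjoint from T
  have key : ∀ a ∈ S, ∃ U : Set Y, IsClopen U ∧ a ∈ U ∧ U ∩ T = ∅ := by
    intro a ha
    have hcc := connectedComponent_eq_iInter_isClopen a
    have hempty : T ∩ ⋂ (s : { s : Set Y // IsClopen s ∧ a ∈ s }), (s : Set Y) = ∅ := by
      rw [inter_comm, ← hcc]; exact h a ha
    obtain ⟨fin, hfin⟩ := hT.isCompact.elim_finite_subfamily_closed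
      (fun s : { s : Set Y // IsClopen s ∧ a ∈ s } => (s : Set Y))
      (fun s => s.2.1.1) hempty
    refine ⟨⋂ i ∈ fin, (i : Set Y), isClopen_biInter_finset fun i _ => i.2.1, ?_, ?_⟩
    · exact mem_iInter₂.2 fun i _ => i.2.2
    · rw [inter_comm]; exact hfin
  choose! U hUclopen hUmem hUT using key
  obtain ⟨t, hts, htfin, ht⟩ := hS.isCompact.elim_finite_subcover_image
    (fun a ha => (hUclopen a ha).2) (fun a ha => mem_biUnion ha (hUmem a ha))
  refine ⟨⋃ a ∈ t, U a, ?_, ht, ?_⟩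
  · exact htfin.isClopen_biUnion fun a ha => hUclopen a (hts ha)
  · rw [iUnion₂_inter]
    simp only [iUnion_eq_empty]
    exact fun a ha => hUT a (hts ha)

/-- If `F` cuts a compact Hausdorff space `X` between disjoint closed sets `X₀`, `X₁`, then any
open set `V ⊇ F` disjoint from `X₀ ∪ X₁` contains a closed partition between `X₀` and `X₁`. -/
theorem partition_in_open_cut {X : Type*} [TopologicalSpace X] [CompactSpace X] [T2Space X]
    (X0 X1 F V : Set X) (h0 : IsClosed X0) (h1 : IsClosed X1) (hd : Disjoint X0 X1)
    (hcut : ∀ C : Set X, IsCompact C → IsConnected C → (C ∩ X0).Nonempty →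
      (C ∩ X1).Nonempty → (C ∩ F).Nonempty)
    (hV : IsOpen V) (hFV : F ⊆ V) (hVd : Disjoint V (X0 ∪ X1)) :
    ∃ X0' X1' : Set X, IsClosed X0' ∧ IsClosed X1' ∧ X0' ∪ X1' = Set.univ ∧
      X0 ⊆ X0' ∧ X1 ⊆ X1' ∧ X0' ∩ X1' ⊆ V := by
  have hKcl : IsClosed (Vᶜ : Set X) := hV.isClosed_compl
  haveI : CompactSpace (Vᶜ : Set X) := isCompact_iff_compactSpace.mp hKcl.isCompact
  have hX0K : X0 ⊆ Vᶜ := fun x hx hxV =>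
    (hVd.le_bot ⟨hxV, Or.inl hx⟩ : x ∈ (∅ : Set X))
  have hX1K : X1 ⊆ Vᶜ := fun x hx hxV =>
    (hVd.le_bot ⟨hxV, Or.inr hx⟩ : x ∈ (∅ : Set X))
  set S : Set (Vᶜ : Set X) := Subtype.val ⁻¹' X0 with hSdef
  set T : Set (Vᶜ : Set X) := Subtype.val ⁻¹' X1 with hTdef
  have hScl : IsClosed S := h0.preimage continuous_subtype_val
  have hTcl : IsClosed T := h1.preimage continuous_subtype_val
  have hcomp : ∀ a ∈ S, connectedComponent a ∩ T = ∅ := by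
    intro a ha
    by_contra hne
    obtain ⟨b, hbC, hbT⟩ := Set.nonempty_iff_ne_empty.mpr hne
    set C : Set X := Subtype.val '' connectedComponent a with hCdef
    have hCcomp : IsCompact C :=
      isClosed_connectedComponent.isCompact.image continuous_subtype_val
    have hCconn : IsConnected C :=
      isConnected_connectedComponent.image _ continuous_subtype_val.continuousOn
    have h0ne : (C ∩ X0).Nonempty := ⟨a.1, ⟨a, mem_connectedComponent, rfl⟩, ha⟩
    have h1ne : (C ∩ X1).Nonempty := ⟨b.1, ⟨b, hbC, rfl⟩, hbT⟩
    obtain ⟨x, hxC, hxF⟩ := hcut C hCcomp hCconn h0ne h1ne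
    obtain ⟨y, _, rfl⟩ := hxC
    exact y.2 (hFV hxF)
  obtain ⟨U, hUclopen, hSU, hUT⟩ := clopen_sep_aux hScl hTcl hcomp
  set A : Set X := Subtype.val '' U with hAdef
  set B : Set X := Subtype.val '' Uᶜ with hBdef
  have hAcl : IsClosed A := hKcl.isClosedEmbedding_subtypeVal.isClosedMap _ hUclopen.1
  have hBcl : IsClosed B :=
    hKcl.isClosedEmbedding_subtypeVal.isClosedMap _ hUclopen.2.isClosed_compl
  have hAB : Disjoint A B := by
    rw [Set.disjoint_iff_inter_eq_empty, ← Set.image_inter Subtype.val_injective,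
      Set.inter_compl_self, Set.image_empty]
  have hABunion : A ∪ B = Vᶜ := by
    rw [← Set.image_union, Set.union_compl_self, Set.image_univ, Subtype.range_coe]
  have hX0A : X0 ⊆ A := fun x hx => ⟨⟨x, hX0K hx⟩, hSU hx, rfl⟩
  have hX1B : X1 ⊆ B := by
    intro x hx
    refine ⟨⟨x, hX1K hx⟩, fun hxU => ?_, rfl⟩
    have hmem : (⟨x, hX1K hx⟩ : (Vᶜ : Set X)) ∈ U ∩ T := ⟨hxU, hx⟩
    rw [hUT] at hmem
    exact hmem
  obtain ⟨U0, U1, hU0, hU1, hAU0, hBU1, hU01⟩ := normal_separation hAcl hBcl hAB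
  refine ⟨U1ᶜ, U0ᶜ, hU1.isClosed_compl, hU0.isClosed_compl, ?_, ?_, ?_, ?_⟩
  · rw [← Set.compl_inter, Set.inter_comm, hU01.inter_eq, Set.compl_empty]
  · exact fun x hx hxU1 => hU01.le_bot ⟨hAU0 (hX0A hx), hxU1⟩
  · exact fun x hx hxU0 => hU01.le_bot ⟨hxU0, hBU1 (hX1B hx)⟩
  · intro x ⟨hx1, hx0⟩
    by_contra hxV
    have : x ∈ A ∪ B := hABunion ▸ hxV
    rcases this with h | h
    · exact hx0 (hAU0 h)
    · exact hx1 (hBU1 h)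
end

section
/- Let X be a compact Hausdorff space and suppose {B_α : α ∈ Λ} is a downward-directed family of nonempty closed subsets of X, each belonging to the family 𝓑 of closed sets B ⊆ X such that a given continuous map f : A → L (A closed in X, L an absolute neighborhood extensor for compact spaces) admits no continuous extension to A ∪ B. Then the intersection ⋂_α B_α also belongs to 𝓑. Consequently, by Zorn's lemma, 𝓑 has a minimal element whenever it is nonempty. -/
lemma no_ext_iInter {X L : Type*} [TopologicalSpace X] [CompactSpace X]
    [T2Space X] [TopologicalSpace L]
    (hANE : ∀ B : Set X, IsClosed B → ∀ g : X → L, ContinuousOn g B →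
      ∃ (U : Set X) (h : X → L), IsOpen U ∧ B ⊆ U ∧ ContinuousOn h U ∧ Set.EqOn h g B)
    (A : Set X) (hA : IsClosed A) (f : X → L)
    {Λ : Type*} [Nonempty Λ] (B : Λ → Set X)
    (hBcl : ∀ α, IsClosed (B α))
    (hdir : ∀ α β : Λ, ∃ γ, B γ ⊆ B α ∩ B β)
    (hB : ∀ α, ¬ ∃ g : X → L, ContinuousOn g (A ∪ B α) ∧ Set.EqOn g f A) :
    ¬ ∃ g : X → L, ContinuousOn g (A ∪ ⋂ α, B α) ∧ Set.EqOn g f A := by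
  rintro ⟨g, hg, hgf⟩
  have hCcl : IsClosed (A ∪ ⋂ α, B α) := hA.union (isClosed_iInter hBcl)
  obtain ⟨U, h, hU, hCU, hh, heq⟩ := hANE _ hCcl g hg
  -- find α with B α ⊆ U
  have hsub : ∃ α, B α ⊆ U := by
    by_contra hcon
    push_neg at hcon
    have hne : ∀ α, (B α \ U).Nonempty := by
      intro α
      obtain ⟨x, hx, hxU⟩ := Set.not_subset.1 (hcon α)
      exact ⟨x, hx, hxU⟩
    have := IsCompact.nonempty_iInter_of_directed_nonempty_isCompact_isClosed
      (fun α => B α \ U)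
      (fun α β => by
        obtain ⟨γ, hγ⟩ := hdir α β
        exact ⟨γ, Set.diff_subset_diff_left (hγ.trans Set.inter_subset_left),
          Set.diff_subset_diff_left (hγ.trans Set.inter_subset_right)⟩)
      hne
      (fun α => ((hBcl α).sdiff hU).isCompact)
      (fun α => (hBcl α).sdiff hU)
    obtain ⟨x, hx⟩ := this
    simp only [Set.mem_iInter, Set.mem_diff] at hx
    have hxI : x ∈ ⋂ α, B α := Set.mem_iInter.2 fun α => (hx α).1
    exact (hx (Classical.arbitrary Λ)).2 (hCU (Or.inr hxI))
  obtain ⟨α, hα⟩ := hsub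
  refine hB α ⟨h, hh.mono ?_, fun a ha => ?_⟩
  · exact Set.union_subset (fun a ha => hCU (Or.inl ha)) hα
  · rw [heq (Or.inl ha)]; exact hgf ha

/-- The family 𝓑 of closed sets `B` such that `f : A → L` does not extend over `A ∪ B` is closed
under intersections of downward-directed families of nonempty closed sets, and (by Zorn's lemma)
has a minimal element. Here `L` is an absolute neighborhood extensor for compact spaces. -/
theorem directed_intersection_no_extension {X L : Type*} [TopologicalSpace X] [CompactSpace X]
    [T2Space X] [TopologicalSpace L]
    (hANE : ∀ B : Set X, IsClosed B → ∀ g : X → L, ContinuousOn g B →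
      ∃ (U : Set X) (h : X → L), IsOpen U ∧ B ⊆ U ∧ ContinuousOn h U ∧ Set.EqOn h g B)
    (A : Set X) (hA : IsClosed A) (f : X → L) (hf : ContinuousOn f A)
    {Λ : Type*} [Nonempty Λ] (B : Λ → Set X)
    (hBcl : ∀ α, IsClosed (B α)) (hBne : ∀ α, (B α).Nonempty)
    (hdir : ∀ α β : Λ, ∃ γ, B γ ⊆ B α ∩ B β)
    (hB : ∀ α, ¬ ∃ g : X → L, ContinuousOn g (A ∪ B α) ∧ Set.EqOn g f A) :
    (¬ ∃ g : X → L, ContinuousOn g (A ∪ ⋂ α, B α) ∧ Set.EqOn g f A) ∧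
      ∃ M : Set X, IsClosed M ∧ (¬ ∃ g : X → L, ContinuousOn g (A ∪ M) ∧ Set.EqOn g f A) ∧
        ∀ M' : Set X, IsClosed M' → M' ⊆ M →
          (¬ ∃ g : X → L, ContinuousOn g (A ∪ M') ∧ Set.EqOn g f A) → M' = M := by
  constructor
  · exact no_ext_iInter hANE A hA f B hBcl hdir hB
  · set S : Set (Set X) :=
      {M | IsClosed M ∧ ¬ ∃ g : X → L, ContinuousOn g (A ∪ M) ∧ Set.EqOn g f A} with hS
    have hchain : ∀ c ⊆ S, IsChain (· ⊆ ·) c → c.Nonempty →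
        ∃ lb ∈ S, ∀ s ∈ c, lb ⊆ s := by
      intro c hcS hc hcne
      haveI : Nonempty c := hcne.to_subtype
      refine ⟨⋂ s : c, (s : Set X), ⟨isClosed_iInter fun s => (hcS s.2).1, ?_⟩,
        fun s hs => Set.iInter_subset (fun s : c => (s : Set X)) ⟨s, hs⟩⟩
      refine no_ext_iInter hANE A hA f (fun s : c => (s : Set X))
        (fun s => (hcS s.2).1) ?_ (fun s => (hcS s.2).2)
      rintro ⟨s, hs⟩ ⟨t, ht⟩
      rcases hc.total hs ht with h | h
      · exact ⟨⟨s, hs⟩, Set.subset_inter subset_rfl h⟩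
      · exact ⟨⟨t, ht⟩, Set.subset_inter h subset_rfl⟩
    obtain ⟨m, _, hm⟩ := zorn_superset_nonempty S hchain (B (Classical.arbitrary Λ))
      ⟨hBcl _, hB _⟩
    exact ⟨m, hm.prop.1, hm.prop.2, fun M' hM' hsub hne => hm.eq_of_le ⟨hM', hne⟩ hsub⟩
end

section
/- A homogeneous continuum X is infinite-dimensional (covering dimension) if and only if X is not strongly countable dimensional, i.e., X cannot be written as a countable union of closed finite-dimensional subsets. -/
/-! By Baire, some `F k` has interior, and by homogeneity and compactness finitely many
homeomorphic copies of `F k` cover `X`. Dimension `≤ n` passes from closed sets to finite unions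
of them (shrink the cover successively on each copy; shrinking never raises the order), so
`dim X ≤ n`. -/

/-- Covering dimension of a space is at most `n`: every open cover admits an open shrinking
of order at most `n + 1`. -/
def CovDimLE (Y : Type*) [TopologicalSpace Y] (n : ℕ) : Prop :=
  ∀ (ι : Type) (U : ι → Set Y), (∀ i, IsOpen (U i)) → (⋃ i, U i) = Set.univ →
    ∃ V : ι → Set Y, (∀ i, IsOpen (V i)) ∧ (∀ i, V i ⊆ U i) ∧ (⋃ i, V i) = Set.univ ∧
      ∀ y : Y, {i | y ∈ V i}.encard ≤ (n : ℕ∞) + 1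

open Set

section CovDim

variable {Y : Type*} [TopologicalSpace Y] {n : ℕ}

theorem CovDimLE.of_homeomorph {Z : Type*} [TopologicalSpace Z] (e : Y ≃ₜ Z)
    (h : CovDimLE Y n) : CovDimLE Z n := by
  intro ι U hUo hUc
  obtain ⟨W, hWo, hWU, hWc, hWord⟩ := h ι (fun i => e ⁻¹' U i)
    (fun i => (hUo i).preimage e.continuous) (by rw [← preimage_iUnion, hUc, preimage_univ])
  refine ⟨fun i => e.symm ⁻¹' W i, fun i => (hWo i).preimage e.symm.continuous,
    fun i z hz => by simpa using hWU i hz, by rw [← preimage_iUnion, hWc, preimage_univ],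
    fun z => hWord (e.symm z)⟩

variable (n) in
def CovDimLEOn (S : Set Y) : Prop :=
  ∀ (ι : Type) (U : ι → Set Y), (∀ i, IsOpen (U i)) → (⋃ i, U i) = univ →
    ∃ V : ι → Set Y, (∀ i, IsOpen (V i)) ∧ (∀ i, V i ⊆ U i) ∧ (⋃ i, V i) = univ ∧
      ∀ y ∈ S, {i | y ∈ V i}.encard ≤ (n : ℕ∞) + 1

theorem covDimLEOn_univ_iff : CovDimLEOn n (univ : Set Y) ↔ CovDimLE Y n := by
  simp only [CovDimLEOn, CovDimLE, mem_univ, true_imp_iff]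

theorem CovDimLEOn.mono {S T : Set Y} (h : CovDimLEOn n T) (hST : S ⊆ T) : CovDimLEOn n S :=
  fun ι U hUo hUc =>
    let ⟨V, hVo, hVU, hVc, hVord⟩ := h ι U hUo hUc
    ⟨V, hVo, hVU, hVc, fun y hy => hVord y (hST hy)⟩

/-- A shrinking of the trace cover on `A` is extended off `A` by the original cover, which adds
no new indices at points of `A`. -/
theorem IsClosed.covDimLEOn {A : Set Y} (hA : IsClosed A) (h : CovDimLE A n) :
    CovDimLEOn n A := by
  intro ι U hUo hUc
  obtain ⟨W, hWo, hWU, hWc, hWord⟩ := h ι (fun i => Subtype.val ⁻¹' U i)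
    (fun i => (hUo i).preimage continuous_subtype_val)
    (by rw [← preimage_iUnion, hUc, preimage_univ])
  choose O hOo hOW using fun i => isOpen_induced_iff.mp (hWo i)
  refine ⟨fun i => O i ∩ U i ∪ U i \ A, fun i => ((hOo i).inter (hUo i)).union ((hUo i).sdiff hA),
    fun i => union_subset inter_subset_right sdiff_subset, ?_, ?_⟩
  · refine eq_univ_of_forall fun y => ?_
    by_cases hy : y ∈ A
    · obtain ⟨i, hi⟩ := mem_iUnion.mp (hWc ▸ mem_univ (⟨y, hy⟩ : A))
      rw [← hOW i] at hi
      exact mem_iUnion.mpr ⟨i, Or.inl ⟨hi, hWU i (by rwa [← hOW i])⟩⟩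
    · obtain ⟨i, hi⟩ := mem_iUnion.mp (hUc ▸ mem_univ y)
      exact mem_iUnion.mpr ⟨i, Or.inr ⟨hi, hy⟩⟩
  · refine fun y hy => (encard_mono fun i hi => ?_).trans (hWord ⟨y, hy⟩)
    rcases hi with hi | hi
    · show _ ∈ W i
      rw [← hOW i]
      exact hi.1
    · exact absurd hy hi.2

theorem CovDimLEOn.union {S T : Set Y} (hS : CovDimLEOn n S) (hT : CovDimLEOn n T) :
    CovDimLEOn n (S ∪ T) := by
  intro ι U hUo hUc
  obtain ⟨V, hVo, hVU, hVc, hVord⟩ := hS ι U hUo hUc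
  obtain ⟨W, hWo, hWV, hWc, hWord⟩ := hT ι V hVo hVc
  refine ⟨W, hWo, fun i => (hWV i).trans (hVU i), hWc, ?_⟩
  rintro y (hy | hy)
  · exact (encard_mono fun i hi => hWV i hi).trans (hVord y hy)
  · exact hWord y hy

theorem CovDimLEOn.biUnion_finset {ι : Type*} {S : ι → Set Y} (t : Finset ι)
    (h : ∀ i ∈ t, CovDimLEOn n (S i)) : CovDimLEOn n (⋃ i ∈ t, S i) := by
  classical
  induction t using Finset.induction_on with
  | empty => exact fun ι U hUo hUc => ⟨U, hUo, fun _ => subset_rfl, hUc, fun y hy => by simp at hy⟩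
  | insert a t _ ih =>
    rw [Finset.set_biUnion_insert]
    exact (h a (t.mem_insert_self a)).union (ih fun i hi => h i (Finset.mem_insert_of_mem hi))

end CovDim

theorem exists_finset_homeomorph_image_eq_univ {X : Type*} [TopologicalSpace X] [CompactSpace X]
    (hhom : ∀ x y : X, ∃ h : X ≃ₜ X, h x = y) {U : Set X} (hU : IsOpen U) (hne : U.Nonempty) :
    ∃ t : Finset (X ≃ₜ X), ⋃ h ∈ t, h '' U = univ := by
  classical
  obtain ⟨x, hx⟩ := hne
  choose g hg using hhom x
  obtain ⟨t, ht⟩ := isCompact_univ.elim_finite_subcover (fun y => g y '' U)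
    (fun y => (g y).isOpenMap U hU) fun y _ => mem_iUnion.mpr ⟨y, x, hx, hg y⟩
  exact ⟨t.image g, by rw [Finset.set_biUnion_finset_image]; exact univ_subset_iff.mp ht⟩

theorem homogeneous_continuum_infiniteDim_iff_not_strongly_countable_dim_general
    {X : Type*} [TopologicalSpace X] [CompactSpace X] [T2Space X] [ConnectedSpace X]
    (hhom : ∀ x y : X, ∃ h : X ≃ₜ X, h x = y) :
    (¬ ∃ n : ℕ, CovDimLE X n) ↔
      ¬ ∃ F : ℕ → Set X, (∀ i, IsClosed (F i)) ∧ (∀ i, ∃ n : ℕ, CovDimLE (F i) n) ∧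
        (⋃ i, F i) = Set.univ := by
  refine not_congr ⟨fun ⟨n, hn⟩ => ⟨fun _ => univ, fun _ => isClosed_univ,
    fun _ => ⟨n, hn.of_homeomorph (Homeomorph.Set.univ X).symm⟩, iUnion_const _⟩, ?_⟩
  rintro ⟨F, hFc, hFdim, hFX⟩
  obtain ⟨k, hk⟩ := nonempty_interior_of_iUnion_of_closed hFc hFX
  obtain ⟨n, hn⟩ := hFdim k
  obtain ⟨t, ht⟩ := exists_finset_homeomorph_image_eq_univ hhom isOpen_interior hk
  have htranslates : CovDimLEOn n (⋃ h ∈ t, h '' F k) :=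
    CovDimLEOn.biUnion_finset t fun h _ =>
      (h.isClosedMap _ (hFc k)).covDimLEOn (hn.of_homeomorph (h.image (F k)))
  refine ⟨n, covDimLEOn_univ_iff.mp (htranslates.mono ?_)⟩
  rw [← ht]
  exact iUnion₂_mono fun h _ => image_mono interior_subset

/-- A homogeneous metrizable continuum is infinite-dimensional iff it is not strongly
countable dimensional. -/
theorem homogeneous_continuum_infiniteDim_iff_not_strongly_countable_dim
    {X : Type*} [TopologicalSpace X] [CompactSpace X] [T2Space X] [ConnectedSpace X]
    [TopologicalSpace.MetrizableSpace X]
    (hhom : ∀ x y : X, ∃ h : X ≃ₜ X, h x = y) :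
    (¬ ∃ n : ℕ, CovDimLE X n) ↔
      ¬ ∃ F : ℕ → Set X, (∀ i, IsClosed (F i)) ∧ (∀ i, ∃ n : ℕ, CovDimLE (F i) n) ∧
        (⋃ i, F i) = Set.univ :=
  homogeneous_continuum_infiniteDim_iff_not_strongly_countable_dim_general hhom
end

section
/- Let X be a compact metrizable space on which the homeomorphism group acts transitively, let 𝒞 be a class of spaces closed under homeomorphism and under passing to F_σ subsets, and suppose X = ⋃_{i=0}^∞ F_i where each F_i is a proper closed subset and ⋃_{i≠j} (F_i ∩ F_j) ∈ 𝒞. If K ⊆ X is a strong Cantor manifold with respect to 𝒞 (i.e., K admits no such decomposition into proper closed sets with small pairwise intersections), then there exists exactly one index i with K ⊆ F_i. -/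
/-- `T` is an `F_σ`-subset of `S` (in the subspace `S`): a countable union of sets closed in `S`. -/
def FsigmaIn {X : Type*} [TopologicalSpace X] (T S : Set X) : Prop :=
  T ⊆ S ∧ ∃ f : ℕ → Set X, (∀ n, ∃ c : Set X, IsClosed c ∧ f n = c ∩ S) ∧ T = ⋃ n, f n

/-- `K` is a strong Cantor manifold with respect to the class `C`: it admits no decomposition
into countably many proper relatively closed subsets whose pairwise intersections have union
in `C`. -/
def StrongCantorManifoldWrt {X : Type*} [TopologicalSpace X] (C : Set X → Prop) (K : Set X) :
    Prop :=
  ¬ ∃ G : ℕ → Set X, (∀ i, G i ⊆ K ∧ G i ≠ K ∧ IsClosed {x : K | (x : X) ∈ G i}) ∧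
    (⋃ i, G i) = K ∧ C (⋃ i, ⋃ j, ⋃ (_ : i ≠ j), G i ∩ G j)

/-- Helper: a countable union of closed subsets of `S` is `F_σ` in `S`. -/
lemma fsigmaIn_of_closed {X : Type*} [TopologicalSpace X] {S : Set X} (g : ℕ → Set X)
    (hg : ∀ n, IsClosed (g n) ∧ g n ⊆ S) : FsigmaIn (⋃ n, g n) S :=
  ⟨Set.iUnion_subset fun n => (hg n).2, g,
    fun n => ⟨g n, (hg n).1, (Set.inter_eq_left.2 (hg n).2).symm⟩, rfl⟩

/-- Helper: rewrite a pairwise-distinct double union as a single countable union. -/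
lemma pair_union_eq {X : Type*} (B : ℕ → ℕ → Set X) :
    (⋃ i, ⋃ j, ⋃ (_ : i ≠ j), B i j) =
      ⋃ n : ℕ, if n.unpair.1 ≠ n.unpair.2 then B n.unpair.1 n.unpair.2 else ∅ := by
  ext x
  simp only [Set.mem_iUnion]
  constructor
  · rintro ⟨i, j, hij, hx⟩
    exact ⟨Nat.pair i j, by simp [Nat.unpair_pair, hij, hx]⟩
  · rintro ⟨n, hn⟩
    by_cases h : n.unpair.1 ≠ n.unpair.2
    · refine ⟨n.unpair.1, n.unpair.2, h, ?_⟩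
      simpa [h] using hn
    · simp [h] at hn

/-- Proposition 4.7: a strong Cantor manifold (a nondegenerate continuum) with respect to an
admissible class `C` is contained in exactly one member of a decomposition of `X` into proper
closed sets whose pairwise intersections have union in `C`. -/
theorem strongCantorManifold_unique_index {X : Type*} [TopologicalSpace X] [CompactSpace X]
    [TopologicalSpace.MetrizableSpace X]
    (hhom : ∀ x y : X, ∃ h : X ≃ₜ X, h x = y)
    (C : Set X → Prop)
    (hChomeo : ∀ S T : Set X, C S → Nonempty (S ≃ₜ T) → C T)
    (hCFsig : ∀ S T : Set X, C S → FsigmaIn T S → C T)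
    (F : ℕ → Set X) (hFcl : ∀ i, IsClosed (F i)) (hFprop : ∀ i, F i ≠ Set.univ)
    (hFcov : (⋃ i, F i) = Set.univ)
    (hFsmall : C (⋃ i, ⋃ j, ⋃ (_ : i ≠ j), F i ∩ F j))
    (K : Set X) (hKcomp : IsCompact K) (hKconn : IsConnected K) (hKnt : K.Nontrivial)
    (hK : StrongCantorManifoldWrt C K) :
    ∃! i, K ⊆ F i := by
  letI : MetricSpace X := TopologicalSpace.metrizableSpaceMetric X
  have hKcl : IsClosed K := hKcomp.isClosed
  -- Existence
  have hex : ∃ i, K ⊆ F i := by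
    by_contra h
    push_neg at h
    apply hK
    refine ⟨fun i => F i ∩ K, fun i => ⟨Set.inter_subset_right, ?_, ?_⟩, ?_, ?_⟩
    · intro he
      exact h i (Set.inter_eq_right.1 he)
    · have : {x : K | (x : X) ∈ F i ∩ K} = (Subtype.val : K → X) ⁻¹' (F i) := by
        ext x; simp [x.2]
      rw [this]
      exact (hFcl i).preimage continuous_subtype_val
    · ext x
      simp only [Set.mem_iUnion, Set.mem_inter_iff]
      constructor
      · rintro ⟨i, _, hx⟩; exact hx
      · intro hx
        have : x ∈ ⋃ i, F i := by rw [hFcov]; trivial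
        obtain ⟨i, hi⟩ := Set.mem_iUnion.1 this
        exact ⟨i, hi, hx⟩
    · apply hCFsig _ _ hFsmall
      rw [pair_union_eq (fun i j => (F i ∩ K) ∩ (F j ∩ K))]
      apply fsigmaIn_of_closed
      intro n
      by_cases hn : n.unpair.1 ≠ n.unpair.2
      · simp only [if_pos hn]
        constructor
        · exact (((hFcl _).inter hKcl).inter ((hFcl _).inter hKcl))
        · intro x hx
          exact Set.mem_iUnion.2 ⟨n.unpair.1, Set.mem_iUnion.2 ⟨n.unpair.2,
            Set.mem_iUnion.2 ⟨hn, hx.1.1, hx.2.1⟩⟩⟩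
      · simp [hn]
  obtain ⟨i, hi⟩ := hex
  refine ⟨i, hi, ?_⟩
  intro j hj
  by_contra hji
  -- K ⊆ F j ∩ F i with j ≠ i, so K is in C
  have hKsub : K ⊆ ⋃ i, ⋃ j, ⋃ (_ : i ≠ j), F i ∩ F j := by
    intro x hx
    exact Set.mem_iUnion.2 ⟨j, Set.mem_iUnion.2 ⟨i, Set.mem_iUnion.2 ⟨hji, hj hx, hi hx⟩⟩⟩
  have hCK : C K := by
    apply hCFsig _ _ hFsmall
    exact ⟨hKsub, fun _ => K, fun n => ⟨K, hKcl, (Set.inter_eq_left.2 hKsub).symm⟩,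
      (Set.iUnion_const K).symm⟩
  -- Build a forbidden decomposition of K
  obtain ⟨a, ha, b, hb, hab⟩ := hKnt
  set r : ℝ := dist a b / 2 with hr
  have hdpos : 0 < dist a b := dist_pos.2 hab
  have hrpos : 0 < r := by rw [hr]; linarith
  have hrlt : r < dist a b := by rw [hr]; linarith
  set G : ℕ → Set X := fun n =>
    if n = 0 then K ∩ {x | dist a x ≤ r} else if n = 1 then K ∩ {x | r ≤ dist a x} else ∅
    with hG
  have hGclX : ∀ n, IsClosed (G n) ∧ G n ⊆ K := by
    intro n
    rcases n with _ | _ | n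
    · exact ⟨hKcl.inter (isClosed_le (continuous_const.dist continuous_id) continuous_const),
        Set.inter_subset_left⟩
    · exact ⟨hKcl.inter (isClosed_le continuous_const (continuous_const.dist continuous_id)),
        Set.inter_subset_left⟩
    · simp [hG]
  apply hK
  refine ⟨G, fun n => ⟨(hGclX n).2, ?_, ?_⟩, ?_, ?_⟩
  · -- proper
    rcases n with _ | _ | n
    · intro he
      have hbG : b ∈ K ∩ {x | dist a x ≤ r} := by rw [show K ∩ {x | dist a x ≤ r} = G 0 from rfl, he]; exact hb
      exact absurd hbG.2 (not_le.2 hrlt)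
    · intro he
      have haG : a ∈ K ∩ {x | r ≤ dist a x} := by rw [show K ∩ {x | r ≤ dist a x} = G 1 from rfl, he]; exact ha
      have : r ≤ dist a a := haG.2
      rw [dist_self] at this
      exact absurd this (not_le.2 hrpos)
    · intro he
      have : a ∈ (∅ : Set X) := by rw [show (∅ : Set X) = G (n+2) from rfl, he]; exact ha
      exact this
  · -- relatively closed
    have : {x : K | (x : X) ∈ G n} = (Subtype.val : K → X) ⁻¹' (G n) := rfl
    rw [this]
    exact (hGclX n).1.preimage continuous_subtype_val
  · -- covers K
    apply Set.Subset.antisymm (Set.iUnion_subset fun n => (hGclX n).2)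
    intro x hx
    rcases le_total (dist a x) r with h | h
    · exact Set.mem_iUnion.2 ⟨0, by simp [hG, hx, h]⟩
    · exact Set.mem_iUnion.2 ⟨1, by simp [hG, hx, h]⟩
  · -- small pairwise intersections
    apply hCFsig _ _ hCK
    rw [pair_union_eq (fun i j => G i ∩ G j)]
    apply fsigmaIn_of_closed
    intro n
    by_cases hn : n.unpair.1 ≠ n.unpair.2
    · simp only [if_pos hn]
      exact ⟨(hGclX _).1.inter (hGclX _).1,
        fun x hx => (hGclX _).2 hx.1⟩
    · simp [hn]
end

section
/- Let X be a locally compact Hausdorff space that is a Cantor manifold with respect to an admissible class 𝒞 (no closed subset in 𝒞 separates X), assume X is not a strong Cantor manifold with respect to 𝒞, and assume no nonempty open subset of X belongs to 𝒞. Then X admits a representation X = ⋃_{i=0}^∞ F_i by proper closed subsets with ⋃_{i≠j}(F_i ∩ F_j) ∈ 𝒞, such that additionally: (i) no finite union of the F_i covers X; (ii) each F_i has nonempty interior; (iii) F_i ∩ int(F_j) = ∅ whenever i ≠ j. -/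
/-- `X` is a strong Cantor manifold with respect to the class `C`. -/
def StrongCantorManifold (X : Type*) [TopologicalSpace X] (C : Set X → Prop) : Prop :=
  ¬ ∃ F : ℕ → Set X, (∀ i, IsClosed (F i) ∧ F i ≠ Set.univ) ∧ (⋃ i, F i) = Set.univ ∧
    C (⋃ i, ⋃ j, ⋃ (_ : i ≠ j), F i ∩ F j)

/-!
Closed sets in `C` are nowhere dense in a Cantor manifold, so the Baire category theorem forces
infinitely many pieces of a decomposition `X = ⋃ Fᵢ` to have nonempty interior, while no finite
union of pieces covers `X`. Merging each remaining piece into one with nonempty interior gives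
(ii). Distinct pieces now have disjoint interiors, as `Fᵢ ∩ Fⱼ` is a closed set in `C`; removing
from each piece the interiors of all the others then gives (iii) without losing the covering.
-/

open Set

section

variable {X ι : Type*}

def pairwiseInter (F : ι → Set X) : Set X := ⋃ i, ⋃ j, ⋃ (_ : i ≠ j), F i ∩ F j

lemma inter_subset_pairwiseInter {F : ι → Set X} {i j : ι} (hij : i ≠ j) :
    F i ∩ F j ⊆ pairwiseInter F :=
  subset_iUnion_of_subset i <| subset_iUnion_of_subset j <| subset_iUnion_of_subset hij subset_rfl

lemma pairwiseInter_mono {F G : ι → Set X} (h : ∀ i, F i ⊆ G i) :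
    pairwiseInter F ⊆ pairwiseInter G :=
  iUnion_mono fun i => iUnion_mono fun j => iUnion_mono fun _ => inter_subset_inter (h i) (h j)

lemma pairwiseInter_eq_iUnion_subtype (F : ι → Set X) :
    pairwiseInter F = ⋃ q : {q : ι × ι // q.1 ≠ q.2}, F q.1.1 ∩ F q.1.2 := by
  ext x
  simp [pairwiseInter]

variable [TopologicalSpace X]

lemma fsigmaIn_iUnion [Countable ι] {S : Set X} {c : ι → Set X} (hc : ∀ i, IsClosed (c i))
    (hcS : ∀ i, c i ⊆ S) : FsigmaIn (⋃ i, c i) S := by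
  refine ⟨iUnion_subset hcS, ?_⟩
  cases isEmpty_or_nonempty ι
  · exact ⟨fun _ => ∅, fun _ => ⟨∅, isClosed_empty, (empty_inter S).symm⟩, by simp⟩
  · obtain ⟨e, he⟩ := exists_surjective_nat ι
    exact ⟨fun n => c (e n), fun n => ⟨c (e n), hc _, (inter_eq_left.2 (hcS _)).symm⟩,
      (he.iUnion_comp c).symm⟩

def FsigmaHereditary (C : Set X → Prop) : Prop := ∀ S T, C S → FsigmaIn T S → C T

namespace FsigmaHereditary

variable {C : Set X → Prop}

lemma iUnion_of_isClosed [Countable ι] (hC : FsigmaHereditary C) {S : Set X} (hS : C S)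
    {c : ι → Set X} (hc : ∀ i, IsClosed (c i)) (hcS : ∀ i, c i ⊆ S) : C (⋃ i, c i) :=
  hC S _ hS (fsigmaIn_iUnion hc hcS)

lemma of_isClosed_subset (hC : FsigmaHereditary C) {S T : Set X} (hS : C S) (hT : IsClosed T)
    (hTS : T ⊆ S) : C T := by
  simpa only [iUnion_const] using
    hC.iUnion_of_isClosed (ι := Unit) hS (fun _ => hT) (fun _ => hTS)

lemma pairwiseInter_of_subset [Countable ι] (hC : FsigmaHereditary C) {S : Set X} (hS : C S)
    {F : ι → Set X} (hF : ∀ i, IsClosed (F i)) (hFS : pairwiseInter F ⊆ S) :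
    C (pairwiseInter F) := by
  rw [pairwiseInter_eq_iUnion_subtype] at hFS ⊢
  exact hC.iUnion_of_isClosed hS (fun q => (hF _).inter (hF _)) fun q =>
    (subset_iUnion _ q).trans hFS

end FsigmaHereditary

end

section

variable {X ι : Type*} [TopologicalSpace X]

def CantorManifold (C : Set X → Prop) : Prop :=
  ¬ ∃ A B : Set X, IsClosed A ∧ IsClosed B ∧ A ≠ univ ∧ B ≠ univ ∧ A ∪ B = univ ∧ C (A ∩ B)

structure IsDecomposition (C : Set X → Prop) (F : ι → Set X) : Prop where
  isClosed : ∀ i, IsClosed (F i)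
  ne_univ : ∀ i, F i ≠ univ
  iUnion_eq : ⋃ i, F i = univ
  pairwiseInter : C (pairwiseInter F)

lemma biUnion_eq_univ_of_interior_eq_empty [BaireSpace X] [Countable ι] {F : ι → Set X}
    (hF : ∀ i, IsClosed (F i)) (hcov : ⋃ i, F i = univ) (s : Finset ι)
    (hs : ∀ i ∉ s, interior (F i) = ∅) : ⋃ i ∈ s, F i = univ := by
  have hsub : ⋃ i, interior (F i) ⊆ ⋃ i ∈ s, F i := by
    refine iUnion_subset fun i x hx => ?_
    by_cases hi : i ∈ s
    · exact mem_biUnion hi (interior_subset hx)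
    · simp [hs i hi] at hx
  rw [← (isClosed_biUnion_finset fun i _ => hF i).closure_eq]
  exact ((dense_iUnion_interior_of_closed hF hcov).mono hsub).closure_eq

namespace CantorManifold

variable {C : Set X → Prop}

lemma interior_eq_empty (hX : CantorManifold C) (hC : FsigmaHereditary C) (huniv : ¬ C univ)
    {S : Set X} (hS : IsClosed S) (hCS : C S) : interior S = ∅ := by
  rw [← not_nonempty_iff_eq_empty]
  intro hne
  refine hX ⟨S, (interior S)ᶜ, hS, isOpen_interior.isClosed_compl, fun h => huniv (h ▸ hCS),
    compl_ne_univ.2 hne, ?_, ?_⟩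
  · exact eq_univ_of_forall fun y => (em (y ∈ interior S)).imp (interior_subset ·) id
  · exact hC.of_isClosed_subset hCS (hS.inter isOpen_interior.isClosed_compl) inter_subset_left

lemma biUnion_ne_univ [Nonempty X] (hX : CantorManifold C) (hC : FsigmaHereditary C)
    {F : ι → Set X} (hF : IsDecomposition C F) (s : Finset ι) : ⋃ i ∈ s, F i ≠ univ := by
  classical
  induction s using Finset.induction_on with
  | empty => simpa using empty_ne_univ
  | insert a s ha ih =>
    have hB : IsClosed (⋃ i ∈ s, F i) := isClosed_biUnion_finset fun i _ => hF.isClosed i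
    have hAB : F a ∩ ⋃ i ∈ s, F i ⊆ pairwiseInter F := by
      simp only [inter_iUnion₂, iUnion_subset_iff]
      exact fun i hi => inter_subset_pairwiseInter (ne_of_mem_of_not_mem hi ha).symm
    rw [Finset.set_biUnion_insert]
    exact fun h => hX ⟨F a, _, hF.isClosed a, hB, hF.ne_univ a, ih, h,
      hC.of_isClosed_subset hF.pairwiseInter ((hF.isClosed a).inter hB) hAB⟩

lemma infinite_setOf_interior_nonempty [BaireSpace X] [Nonempty X] [Countable ι]
    (hX : CantorManifold C) (hC : FsigmaHereditary C) {F : ι → Set X} (hF : IsDecomposition C F) :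
    {i | (interior (F i)).Nonempty}.Infinite := by
  intro hfin
  refine hX.biUnion_ne_univ hC hF hfin.toFinset <|
    biUnion_eq_univ_of_interior_eq_empty hF.isClosed hF.iUnion_eq _ fun i hi => ?_
  simpa [not_nonempty_iff_eq_empty] using hi

lemma pairwise_disjoint_interior (hX : CantorManifold C) (hC : FsigmaHereditary C)
    (huniv : ¬ C univ) {F : ι → Set X} (hF : IsDecomposition C F) :
    Pairwise fun i j => Disjoint (interior (F i)) (interior (F j)) := fun i j hij => by
  dsimp only
  rw [disjoint_iff_inter_eq_empty, ← interior_inter]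
  exact hX.interior_eq_empty hC huniv ((hF.isClosed i).inter (hF.isClosed j))
    (hC.of_isClosed_subset hF.pairwiseInter ((hF.isClosed i).inter (hF.isClosed j))
      (inter_subset_pairwiseInter hij))

end CantorManifold

end

section

variable {X ι κ : Type*}

def merge (F : ι → Set X) (σ : ι → κ) (k : κ) : Set X := ⋃ (i) (_ : σ i = k), F i

lemma subset_merge (F : ι → Set X) (σ : ι → κ) (i : ι) : F i ⊆ merge F σ (σ i) :=
  subset_biUnion_of_mem (u := F) rfl

lemma iUnion_merge (F : ι → Set X) (σ : ι → κ) : ⋃ k, merge F σ k = ⋃ i, F i := by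
  ext x
  simp [merge]

lemma pairwiseInter_merge_subset (F : ι → Set X) (σ : ι → κ) :
    pairwiseInter (merge F σ) ⊆ pairwiseInter F := by
  simp only [pairwiseInter, merge, iUnion_inter, inter_iUnion, iUnion_subset_iff]
  rintro k l hkl j rfl i rfl
  exact inter_subset_pairwiseInter fun h => hkl (congrArg σ h)

lemma merge_eq_biUnion_finset (F : ι → Set X) {σ : ι → κ} {k : κ} (hk : (σ ⁻¹' {k}).Finite) :
    merge F σ k = ⋃ i ∈ hk.toFinset, F i := by
  simp [merge]

variable [TopologicalSpace X] {C : Set X → Prop}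

lemma IsDecomposition.merge [Nonempty X] [Countable κ] (hX : CantorManifold C)
    (hC : FsigmaHereditary C) {F : ι → Set X} (hF : IsDecomposition C F) {σ : ι → κ}
    (hσ : ∀ k, (σ ⁻¹' {k}).Finite) : IsDecomposition C (merge F σ) := by
  have hclosed : ∀ k, IsClosed (_root_.merge F σ k) := fun k => by
    rw [merge_eq_biUnion_finset F (hσ k)]
    exact isClosed_biUnion_finset fun i _ => hF.isClosed i
  refine ⟨hclosed, fun k => ?_, (iUnion_merge F σ).trans hF.iUnion_eq,
    hC.pairwiseInter_of_subset hF.pairwiseInter hclosed (pairwiseInter_merge_subset F σ)⟩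
  rw [merge_eq_biUnion_finset F (hσ k)]
  exact hX.biUnion_ne_univ hC hF _

def trim (G : ι → Set X) (i : ι) : Set X := G i \ ⋃ (j) (_ : j ≠ i), interior (G j)

lemma trim_subset (G : ι → Set X) (i : ι) : trim G i ⊆ G i := sdiff_subset

lemma trim_inter_interior_trim (G : ι → Set X) {i j : ι} (hij : i ≠ j) :
    trim G i ∩ interior (trim G j) = ∅ := by
  refine eq_empty_of_forall_notMem fun x ⟨hxi, hxj⟩ => hxi.2 ?_
  exact mem_biUnion hij.symm (interior_mono (trim_subset G j) hxj)

lemma interior_subset_trim {G : ι → Set X}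
    (hG : Pairwise fun i j => Disjoint (interior (G i)) (interior (G j))) (i : ι) :
    interior (G i) ⊆ trim G i := fun x hx =>
  ⟨interior_subset hx, by
    simp only [mem_iUnion, not_exists]
    exact fun j hji hxj => (hG hji).le_bot ⟨hxj, hx⟩⟩

lemma interior_trim {G : ι → Set X}
    (hG : Pairwise fun i j => Disjoint (interior (G i)) (interior (G j))) (i : ι) :
    interior (trim G i) = interior (G i) :=
  (interior_mono (trim_subset G i)).antisymm
    (interior_maximal (interior_subset_trim hG i) isOpen_interior)

lemma iUnion_trim {G : ι → Set X}
    (hG : Pairwise fun i j => Disjoint (interior (G i)) (interior (G j))) :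
    ⋃ i, trim G i = ⋃ i, G i := by
  refine (iUnion_mono (trim_subset G)).antisymm (iUnion_subset fun i x hx => ?_)
  by_cases h : x ∈ ⋃ (j) (_ : j ≠ i), interior (G j)
  · obtain ⟨j, -, hxj⟩ := mem_iUnion₂.1 h
    exact mem_iUnion.2 ⟨j, interior_subset_trim hG j hxj⟩
  · exact mem_iUnion.2 ⟨i, hx, h⟩

lemma IsDecomposition.trim [Countable ι] (hC : FsigmaHereditary C) {G : ι → Set X}
    (hG : IsDecomposition C G)
    (hGi : Pairwise fun i j => Disjoint (interior (G i)) (interior (G j))) :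
    IsDecomposition C (trim G) := by
  have hclosed : ∀ i, IsClosed (_root_.trim G i) := fun i =>
    (hG.isClosed i).sdiff (isOpen_biUnion fun _ _ => isOpen_interior)
  exact ⟨hclosed, fun i h => hG.ne_univ i (univ_subset_iff.1 (h ▸ trim_subset G i)),
    (iUnion_trim hGi).trans hG.iUnion_eq,
    hC.pairwiseInter_of_subset hG.pairwiseInter hclosed (pairwiseInter_mono (trim_subset G))⟩

end

def rankOrSelf (p : ℕ → Prop) [DecidablePred p] (i : ℕ) : ℕ := if p i then Nat.count p i else i

lemma rankOrSelf_nth {p : ℕ → Prop} [DecidablePred p] (hp : {i | p i}.Infinite) (n : ℕ) :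
    rankOrSelf p (Nat.nth p n) = n := by
  simp [rankOrSelf, Nat.nth_mem_of_infinite hp n, Nat.count_nth_of_infinite hp]

lemma finite_preimage_rankOrSelf (p : ℕ → Prop) [DecidablePred p] (n : ℕ) :
    (rankOrSelf p ⁻¹' {n}).Finite := by
  refine (toFinite {Nat.nth p n, n}).subset fun i hi => ?_
  simp only [mem_preimage, mem_singleton_iff, rankOrSelf] at hi
  split_ifs at hi with hpi
  · exact Or.inl (hi ▸ (Nat.nth_count hpi).symm)
  · exact Or.inr hi

theorem cantor_not_strong_decomposition_general {X : Type*} [TopologicalSpace X] [T2Space X]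
    [LocallyCompactSpace X] (C : Set X → Prop)
    (hCFsig : ∀ S T : Set X, C S → FsigmaIn T S → C T)
    (hCantor : ¬ ∃ A B : Set X, IsClosed A ∧ IsClosed B ∧ A ≠ Set.univ ∧ B ≠ Set.univ ∧
      A ∪ B = Set.univ ∧ C (A ∩ B))
    (hNotStrong : ¬ StrongCantorManifold X C)
    (hOpen : ∀ U : Set X, IsOpen U → U.Nonempty → ¬ C U) :
    ∃ F : ℕ → Set X, (∀ i, IsClosed (F i) ∧ F i ≠ Set.univ) ∧ (⋃ i, F i) = Set.univ ∧
      C (⋃ i, ⋃ j, ⋃ (_ : i ≠ j), F i ∩ F j) ∧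
      (∀ s : Finset ℕ, (⋃ i ∈ s, F i) ≠ Set.univ) ∧
      (∀ i, (interior (F i)).Nonempty) ∧
      (∀ i j, i ≠ j → F i ∩ interior (F j) = ∅) := by
  classical
  have hX : CantorManifold C := hCantor
  have hC : FsigmaHereditary C := hCFsig
  obtain ⟨F, hF, hFcov, hFC⟩ := not_not.1 hNotStrong
  have hF : IsDecomposition C F := ⟨fun i => (hF i).1, fun i => (hF i).2, hFcov, hFC⟩
  obtain ⟨x, -⟩ := nonempty_compl.2 (hF.ne_univ 0)
  have : Nonempty X := ⟨x⟩
  have huniv : ¬ C univ := hOpen univ isOpen_univ univ_nonempty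
  set p : ℕ → Prop := fun i => (interior (F i)).Nonempty
  have hp : {i | p i}.Infinite := hX.infinite_setOf_interior_nonempty hC hF
  -- `G n` is the `n`-th piece with nonempty interior, joined with `F n` if that has empty interior.
  set G := merge F (rankOrSelf p)
  have hG : IsDecomposition C G := hF.merge hX hC (finite_preimage_rankOrSelf p)
  have hGi := hX.pairwise_disjoint_interior hC huniv hG
  have hH := hG.trim hC hGi
  refine ⟨trim G, fun i => ⟨hH.isClosed i, hH.ne_univ i⟩, hH.iUnion_eq, hH.pairwiseInter,
    hX.biUnion_ne_univ hC hH, fun n => ?_, fun i j hij => trim_inter_interior_trim G hij⟩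
  rw [interior_trim hGi, ← rankOrSelf_nth hp n]
  exact (Nat.nth_mem_of_infinite hp n).mono (interior_mono (subset_merge F _ _))

/-- Proposition 4.8: a locally compact Cantor manifold with respect to an admissible class `C`
which is not a strong Cantor manifold with respect to `C`, and no nonempty open subset of which
is in `C`, admits a decomposition satisfying the extra conditions (i)-(iii). -/
theorem cantor_not_strong_decomposition {X : Type*} [TopologicalSpace X] [T2Space X]
    [LocallyCompactSpace X] (C : Set X → Prop)
    (hChomeo : ∀ S T : Set X, C S → Nonempty (S ≃ₜ T) → C T)
    (hCFsig : ∀ S T : Set X, C S → FsigmaIn T S → C T)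
    (hCantor : ¬ ∃ A B : Set X, IsClosed A ∧ IsClosed B ∧ A ≠ Set.univ ∧ B ≠ Set.univ ∧
      A ∪ B = Set.univ ∧ C (A ∩ B))
    (hNotStrong : ¬ StrongCantorManifold X C)
    (hOpen : ∀ U : Set X, IsOpen U → U.Nonempty → ¬ C U) :
    ∃ F : ℕ → Set X, (∀ i, IsClosed (F i) ∧ F i ≠ Set.univ) ∧ (⋃ i, F i) = Set.univ ∧
      C (⋃ i, ⋃ j, ⋃ (_ : i ≠ j), F i ∩ F j) ∧
      (∀ s : Finset ℕ, (⋃ i ∈ s, F i) ≠ Set.univ) ∧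
      (∀ i, (interior (F i)).Nonempty) ∧
      (∀ i j, i ≠ j → F i ∩ interior (F j) = ∅) :=
  cantor_not_strong_decomposition_general C hCFsig hCantor hNotStrong hOpen
end

section
/- Let X be a compact Hausdorff space with a basis 𝒰 of open sets satisfying property (H) for a CW-complex K (every continuous map bd(U) → K extends over closure(U) \ V for any U ∈ 𝒰 and any nonempty open V ⊆ U). Let Y ⊆ X be closed, a ∈ Y a boundary point of Y, a ∈ U ∈ 𝒰, and assume every continuous map from a closed subset of bd(U) into K extends over bd(U). Then every continuous map f : Y \ U → K extends continuously over Y. -/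
/-! The map `f` is first extended from the closed set `Y ∩ bd U` of `bd U` over `bd U`, then, by
property (H) with `V = U \ Y` (nonempty because `a` is a boundary point of `Y` lying in `U`), over
`closure U \ V ⊇ Y ∩ closure U`. This extension agrees with `f` on `Y ∩ bd U`, so pasting it with
`f` along the closed sets `Y ∩ closure U` and `Y \ U` gives the extension over `Y`. -/

open Set

lemma IsOpen.inter_frontier_subset_diff {X : Type*} [TopologicalSpace X] {U : Set X}
    (hU : IsOpen U) (Y : Set X) : Y ∩ frontier U ⊆ Y \ U := fun _ hx =>
  ⟨hx.1, fun hxU => hx.2.2 (hU.interior_eq.symm ▸ hxU)⟩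

lemma IsOpen.continuousOn_piecewise {X L : Type*} [TopologicalSpace X] [TopologicalSpace L]
    {U Y : Set X} [∀ x, Decidable (x ∈ U)] (hU : IsOpen U) {f g : X → L}
    (hg : ContinuousOn g (Y ∩ closure U)) (hf : ContinuousOn f (Y \ U))
    (hgf : EqOn g f (Y ∩ frontier U)) : ContinuousOn (U.piecewise g f) Y := by
  refine ContinuousOn.piecewise (fun x hx => hgf hx) hg ?_
  rwa [hU.isClosed_compl.closure_eq]

open Set in
theorem propertyH_extension_general {X L : Type*} [TopologicalSpace X]
    [TopologicalSpace L] (𝒰 : Set (Set X))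
    (hbasis : TopologicalSpace.IsTopologicalBasis 𝒰)
    (hH : ∀ U ∈ 𝒰, ∀ g : X → L, ContinuousOn g (frontier U) →
      ∀ V : Set X, IsOpen V → V.Nonempty → V ⊆ U →
        ∃ g' : X → L, ContinuousOn g' (closure U \ V) ∧ Set.EqOn g' g (frontier U))
    (Y : Set X) (hY : IsClosed Y) (a : X) (habd : a ∈ frontier Y)
    (U : Set X) (hU : U ∈ 𝒰) (haU : a ∈ U)
    (hdim : ∀ B : Set X, IsClosed B → B ⊆ frontier U → ∀ g : X → L, ContinuousOn g B →
      ∃ g' : X → L, ContinuousOn g' (frontier U) ∧ Set.EqOn g' g B) :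
    ∀ f : X → L, ContinuousOn f (Y \ U) →
      ∃ F : X → L, ContinuousOn F Y ∧ Set.EqOn F f (Y \ U) := by
  intro f hf
  classical
  have hUo : IsOpen U := hbasis.isOpen hU
  obtain ⟨g, hg, hgf⟩ := hdim (Y ∩ frontier U) (hY.inter isClosed_frontier) inter_subset_right f
    (hf.mono (hUo.inter_frontier_subset_diff Y))
  have hV : (U ∩ Yᶜ).Nonempty :=
    mem_closure_iff.1 (frontier_eq_closure_inter_closure.subset habd).2 U hUo haU
  obtain ⟨h, hh, hhg⟩ :=
    hH U hU g hg (U ∩ Yᶜ) (hUo.inter hY.isOpen_compl) hV inter_subset_left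
  refine ⟨U.piecewise h f, hUo.continuousOn_piecewise ?_ hf ?_,
    fun x hx => piecewise_eq_of_notMem _ _ _ hx.2⟩
  · exact hh.mono fun x hx => ⟨hx.2, fun hxV => hxV.2 hx.1⟩
  · exact fun x hx => (hhg hx.2).trans (hgf hx)

open Set in
/-- Lemma 5.2 of the paper: under property (H) for a basis `𝒰`, if `a ∈ Y` is a boundary point
of the closed set `Y` and `a ∈ U ∈ 𝒰`, then any map of `Y \ U` into `K` extends over `Y`. -/
theorem propertyH_extension {X L : Type*} [TopologicalSpace X] [CompactSpace X] [T2Space X]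
    [TopologicalSpace L] (𝒰 : Set (Set X))
    (hbasis : TopologicalSpace.IsTopologicalBasis 𝒰)
    (hH : ∀ U ∈ 𝒰, ∀ g : X → L, ContinuousOn g (frontier U) →
      ∀ V : Set X, IsOpen V → V.Nonempty → V ⊆ U →
        ∃ g' : X → L, ContinuousOn g' (closure U \ V) ∧ Set.EqOn g' g (frontier U))
    (Y : Set X) (hY : IsClosed Y) (a : X) (haY : a ∈ Y) (habd : a ∈ frontier Y)
    (U : Set X) (hU : U ∈ 𝒰) (haU : a ∈ U)
    (hdim : ∀ B : Set X, IsClosed B → B ⊆ frontier U → ∀ g : X → L, ContinuousOn g B →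
      ∃ g' : X → L, ContinuousOn g' (frontier U) ∧ Set.EqOn g' g B) :
    ∀ f : X → L, ContinuousOn f (Y \ U) →
      ∃ F : X → L, ContinuousOn F Y ∧ Set.EqOn F f (Y \ U) :=
  propertyH_extension_general 𝒰 hbasis hH Y hY a habd U hU haU hdim
end

section
/- Let X be a compact Hausdorff space, Y ⊆ X closed, C ⊆ Y closed, L an absolute neighborhood extensor for compact Hausdorff spaces, and f : C → L a continuous map with no continuous extension over Y. Then there exists a minimal closed set K ⊆ Y such that f has no continuous extension over C ∪ K; moreover for this minimal K, the set K \ C is nonempty. -/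
/-- Existence of a minimal closed set `K ⊆ Y` over `C ∪ K` of which `f` does not extend;
moreover `K \ C` is nonempty. Here `L` is an ANE for compact Hausdorff spaces. -/
theorem minimal_nonextension_set {X L : Type*} [TopologicalSpace X] [CompactSpace X] [T2Space X]
    [TopologicalSpace L]
    (hANE : ∀ B : Set X, IsClosed B → ∀ g : X → L, ContinuousOn g B →
      ∃ (U : Set X) (h : X → L), IsOpen U ∧ B ⊆ U ∧ ContinuousOn h U ∧ Set.EqOn h g B)
    (Y : Set X) (hY : IsClosed Y) (C : Set X) (hC : IsClosed C) (hCY : C ⊆ Y)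
    (f : X → L) (hf : ContinuousOn f C)
    (hnoext : ¬ ∃ g : X → L, ContinuousOn g Y ∧ Set.EqOn g f C) :
    ∃ K : Set X, K ⊆ Y ∧ IsClosed K ∧
      (¬ ∃ g : X → L, ContinuousOn g (C ∪ K) ∧ Set.EqOn g f C) ∧
      (∀ K' : Set X, K' ⊆ K → IsClosed K' →
        (¬ ∃ g : X → L, ContinuousOn g (C ∪ K') ∧ Set.EqOn g f C) → K' = K) ∧
      (K \ C).Nonempty := by
  set S : Set (Set X) :=
    {K | K ⊆ Y ∧ IsClosed K ∧ ¬ ∃ g : X → L, ContinuousOn g (C ∪ K) ∧ Set.EqOn g f C} with hS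
  have hYS : Y ∈ S := by
    refine ⟨subset_rfl, hY, ?_⟩
    rwa [Set.union_eq_self_of_subset_left hCY]
  have key : ∀ c ⊆ S, IsChain (· ⊆ ·) c → c.Nonempty → ∃ lb ∈ S, ∀ s ∈ c, lb ⊆ s := by
    intro c hcS hchain hcne
    obtain ⟨K₀, hK₀⟩ := hcne
    refine ⟨⋂₀ c, ⟨?_, ?_, ?_⟩, fun s hs => Set.sInter_subset_of_mem hs⟩
    · exact (Set.sInter_subset_of_mem hK₀).trans (hcS hK₀).1
    · exact isClosed_sInter fun K hK => (hcS hK).2.1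
    · rintro ⟨g, hg, hgf⟩
      have hBclosed : IsClosed (C ∪ ⋂₀ c) :=
        hC.union (isClosed_sInter fun K hK => (hcS hK).2.1)
      obtain ⟨U, h, hUopen, hBU, hhU, hhg⟩ := hANE (C ∪ ⋂₀ c) hBclosed g hg
      -- find K ∈ c with K ⊆ U using compactness
      have : ∃ K ∈ c, K ⊆ U := by
        by_contra hcon
        push_neg at hcon
        have hne : ∀ T ∈ (fun K => K \ U) '' c, T.Nonempty := by
          rintro T ⟨K, hK, rfl⟩
          exact Set.diff_nonempty.mpr (hcon K hK)
        have hdir : DirectedOn (· ⊇ ·) ((fun K => K \ U) '' c) := by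
          rintro T₁ ⟨K₁, hK₁, rfl⟩ T₂ ⟨K₂, hK₂, rfl⟩
          rcases hchain.total hK₁ hK₂ with h12 | h21
          · exact ⟨K₁ \ U, ⟨K₁, hK₁, rfl⟩, subset_rfl, Set.diff_subset_diff_left h12⟩
          · exact ⟨K₂ \ U, ⟨K₂, hK₂, rfl⟩, Set.diff_subset_diff_left h21, subset_rfl⟩
        have hcl : ∀ T ∈ (fun K => K \ U) '' c, IsClosed T := by
          rintro T ⟨K, hK, rfl⟩
          exact (hcS hK).2.1.sdiff hUopen
        have hcpt : ∀ T ∈ (fun K => K \ U) '' c, IsCompact T := fun T hT =>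
          (hcl T hT).isCompact
        have : Nonempty ((fun K => K \ U) '' c : Set (Set X)) :=
          ⟨⟨K₀ \ U, ⟨K₀, hK₀, rfl⟩⟩⟩
        obtain ⟨x, hx⟩ :=
          IsCompact.nonempty_sInter_of_directed_nonempty_isCompact_isClosed hdir hne hcpt hcl
        have hxI : x ∈ ⋂₀ c := by
          intro K hK
          exact (hx _ ⟨K, hK, rfl⟩).1
        have hxU : x ∈ U := hBU (Set.mem_union_right _ hxI)
        exact (hx _ ⟨K₀, hK₀, rfl⟩).2 hxU
      obtain ⟨K, hKc, hKU⟩ := this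
      refine (hcS hKc).2.2 ⟨h, hhU.mono ?_, fun x hx => ?_⟩
      · exact Set.union_subset ((Set.subset_union_left.trans hBU)) hKU
      · rw [hhg (Set.mem_union_left _ hx)]
        exact hgf hx
  obtain ⟨K, hKY, ⟨hKY', hKcl, hKnoext⟩, hKmin⟩ := zorn_superset_nonempty S key Y hYS
  refine ⟨K, hKY', hKcl, hKnoext, fun K' hK'K hK'cl hK'ne =>
    subset_antisymm hK'K (hKmin ⟨hK'K.trans hKY', hK'cl, hK'ne⟩ hK'K), ?_⟩
  rw [Set.diff_nonempty]
  intro hKC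
  exact hKnoext ⟨f, by rwa [Set.union_eq_self_of_subset_right hKC], fun x hx => rfl⟩
end

section
/- Let X be a compact Hausdorff space, L an absolute neighborhood extensor for compact Hausdorff spaces, A ⊆ X closed, Y = ⋃_{n≥1} Y_n with each Y_n closed in X, and assume L is an absolute extensor for each Y_n (every continuous map from a closed subset of Y_n into L extends over Y_n). Then every continuous map f : A → L extends continuously over some open neighborhood of A ∪ Y in X. -/
/-!
Put `C₀ = A`, `g₀ = f`. Given a closed `Cₙ` and `gₙ` continuous on it, extend `gₙ` from
`Cₙ ∩ Yₙ` over `Yₙ` and paste, getting a map on `Cₙ ∪ Yₙ`; by the ANE property and normality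
it extends over a closed neighbourhood `Cₙ₊₁` of `Cₙ ∪ Yₙ`. The maps `gₙ` are compatible, so
they glue to a map on `⋃ int Cₙ ⊇ A ∪ ⋃ Yₙ`, which is continuous because near a point of
`int Cₙ` it coincides with `gₙ`.
-/

open Set Filter Topology

section

variable {X L : Type*} [TopologicalSpace X] [TopologicalSpace L]

lemma exists_extension_union {C Z : Set X} (hC : IsClosed C) (hZ : IsClosed Z)
    (hAE : ∀ B : Set X, IsClosed B → B ⊆ Z → ∀ g : X → L, ContinuousOn g B →
      ∃ g' : X → L, ContinuousOn g' Z ∧ EqOn g' g B)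
    {g : X → L} (hg : ContinuousOn g C) :
    ∃ h : X → L, ContinuousOn h (C ∪ Z) ∧ EqOn h g C := by
  classical
  obtain ⟨g', hg', hg'g⟩ := hAE (C ∩ Z) (hC.inter hZ) inter_subset_right g
    (hg.mono inter_subset_left)
  have hZ_eq : EqOn (C.piecewise g g') g' Z := fun x hx => by
    by_cases hxC : x ∈ C
    · rw [piecewise_eq_of_mem _ _ _ hxC]
      exact (hg'g ⟨hxC, hx⟩).symm
    · exact piecewise_eq_of_notMem _ _ _ hxC
  refine ⟨C.piecewise g g', ?_, piecewise_eqOn _ _ _⟩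
  exact (hg.congr (piecewise_eqOn _ _ _)).union_of_isClosed (hg'.congr hZ_eq) hC hZ

lemma exists_extension_closed_nhds [NormalSpace X]
    (hANE : ∀ B : Set X, IsClosed B → ∀ g : X → L, ContinuousOn g B →
      ∃ (U : Set X) (h : X → L), IsOpen U ∧ B ⊆ U ∧ ContinuousOn h U ∧ EqOn h g B)
    {B : Set X} (hB : IsClosed B) {g : X → L} (hg : ContinuousOn g B) :
    ∃ (C : Set X) (h : X → L), IsClosed C ∧ B ⊆ interior C ∧ ContinuousOn h C ∧ EqOn h g B := by
  obtain ⟨U, h, hU, hBU, hh, hhg⟩ := hANE B hB g hg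
  obtain ⟨V, hV, hBV, hVU⟩ := normal_exists_closure_subset hB hU hBU
  exact ⟨closure V, h, isClosed_closure,
    hBV.trans (hV.subset_interior_iff.2 subset_closure), hh.mono hVU, hhg⟩

lemma exists_seq_extensions (Y : ℕ → Set X)
    (step : ∀ n (C : Set X) (g : X → L), IsClosed C → ContinuousOn g C →
      ∃ (C' : Set X) (g' : X → L), IsClosed C' ∧ C ∪ Y n ⊆ interior C' ∧
        ContinuousOn g' C' ∧ EqOn g' g C)
    {A : Set X} (hA : IsClosed A) {f : X → L} (hf : ContinuousOn f A) :
    ∃ (C : ℕ → Set X) (g : ℕ → X → L), C 0 = A ∧ g 0 = f ∧ ∀ n,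
      ContinuousOn (g n) (C n) ∧ C n ∪ Y n ⊆ interior (C (n + 1)) ∧
        EqOn (g (n + 1)) (g n) (C n) := by
  let S := {p : Set X × (X → L) // IsClosed p.1 ∧ ContinuousOn p.2 p.1}
  have hnext : ∀ n (p : S), ∃ q : S,
      p.1.1 ∪ Y n ⊆ interior q.1.1 ∧ EqOn q.1.2 p.1.2 p.1.1 := by
    rintro n ⟨⟨C, g⟩, hC, hg⟩
    obtain ⟨C', g', hC', hsub, hg', hg'g⟩ := step n C g hC hg
    exact ⟨⟨(C', g'), hC', hg'⟩, hsub, hg'g⟩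
  choose next hnext using hnext
  let s : ℕ → S := fun n => Nat.rec ⟨(A, f), hA, hf⟩ next n
  exact ⟨fun n => (s n).1.1, fun n => (s n).1.2, rfl, rfl,
    fun n => ⟨(s n).2.2, hnext n (s n)⟩⟩

lemma exists_continuousOn_iUnion_interior {C : ℕ → Set X} (hC : Monotone C)
    {g : ℕ → X → L} (hg : ∀ n, ContinuousOn (g n) (C n))
    (hcompat : ∀ n, EqOn (g (n + 1)) (g n) (C n)) :
    ∃ G : X → L, ContinuousOn G (⋃ n, interior (C n)) ∧ ∀ n, EqOn G (g n) (C n) := by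
  classical
  have hcompat_le : ∀ {m n}, m ≤ n → EqOn (g n) (g m) (C m) := by
    intro m n hmn
    induction hmn with
    | refl => exact eqOn_refl _ _
    | step hmk ih => exact ((hcompat _).mono (hC hmk)).trans ih
  let G : X → L := fun x => if hx : ∃ n, x ∈ C n then g (Nat.find hx) x else g 0 x
  have hG : ∀ n, EqOn G (g n) (C n) := fun n x hx => by
    have hx' : ∃ n, x ∈ C n := ⟨n, hx⟩
    simp only [G, dif_pos hx']
    exact (hcompat_le (Nat.find_min' hx' hx) (Nat.find_spec hx')).symm
  refine ⟨G, fun x hx => ?_, hG⟩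
  obtain ⟨n, hxn⟩ := mem_iUnion.1 hx
  have hnhds : C n ∈ 𝓝 x := mem_interior_iff_mem_nhds.1 hxn
  exact (((hg n).continuousAt hnhds).congr
    (eventuallyEq_of_mem hnhds (hG n).symm)).continuousWithinAt

end

/-- Lemma 2.2 of the paper: if `L` is an ANE for compact Hausdorff spaces, `A ⊆ X` is closed,
and `Y = ⋃ Y_n` with `Y_n` closed and `L ∈ AE(Y_n)`, then every map `f : A → L` extends over
some open neighborhood of `A ∪ Y`. -/
theorem extension_over_neighborhood {X L : Type*} [TopologicalSpace X] [CompactSpace X]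
    [T2Space X] [TopologicalSpace L]
    (hANE : ∀ B : Set X, IsClosed B → ∀ g : X → L, ContinuousOn g B →
      ∃ (U : Set X) (h : X → L), IsOpen U ∧ B ⊆ U ∧ ContinuousOn h U ∧ Set.EqOn h g B)
    (A : Set X) (hA : IsClosed A) (Y : ℕ → Set X) (hY : ∀ n, IsClosed (Y n))
    (hAE : ∀ n, ∀ B : Set X, IsClosed B → B ⊆ Y n → ∀ g : X → L, ContinuousOn g B →
      ∃ g' : X → L, ContinuousOn g' (Y n) ∧ Set.EqOn g' g B)
    (f : X → L) (hf : ContinuousOn f A) :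
    ∃ (U : Set X) (g : X → L), IsOpen U ∧ A ∪ (⋃ n, Y n) ⊆ U ∧ ContinuousOn g U ∧
      Set.EqOn g f A := by
  have step : ∀ n (C : Set X) (g : X → L), IsClosed C → ContinuousOn g C →
      ∃ (C' : Set X) (g' : X → L), IsClosed C' ∧ C ∪ Y n ⊆ interior C' ∧
        ContinuousOn g' C' ∧ EqOn g' g C := by
    intro n C g hC hg
    obtain ⟨h, hh, hhg⟩ := exists_extension_union hC (hY n) (hAE n) hg
    obtain ⟨C', g', hC', hsub, hg', hg'h⟩ := exists_extension_closed_nhds hANE (hC.union (hY n)) hh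
    exact ⟨C', g', hC', hsub, hg', (hg'h.mono subset_union_left).trans hhg⟩
  obtain ⟨C, g, rfl, rfl, hC⟩ := exists_seq_extensions Y step hA hf
  have hC_mono : Monotone C :=
    monotone_nat_of_le_succ fun n => subset_union_left.trans ((hC n).2.1.trans interior_subset)
  obtain ⟨G, hG, hGg⟩ :=
    exists_continuousOn_iUnion_interior hC_mono (fun n => (hC n).1) (fun n => (hC n).2.2)
  refine ⟨⋃ n, interior (C n), G, isOpen_iUnion fun _ => isOpen_interior, ?_, hG, hGg 0⟩
  refine union_subset ?_ (iUnion_subset fun n => ?_)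
  · exact subset_union_left.trans ((hC 0).2.1.trans (subset_iUnion (fun n => interior (C n)) 1))
  · exact subset_union_right.trans ((hC n).2.1.trans (subset_iUnion (fun n => interior (C n)) _))
end
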